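/- arXiv:0811.1747 — 4 statements merged into one kernel-verified Lean document; each statement's English description precedes it below -/
import Mathlib

section
/- Let H : [t₀,ϑ₀]×ℝⁿ×ℝⁿ → ℝ satisfy conditions H1–H3 with constant Υ > 0. Then there exist a positive integer m, nonempty compact sets P, Q ⊆ ℝ^m, and a function f : [t₀,ϑ₀]×ℝⁿ×P×Q → ℝⁿ satisfying conditions F1–F3 such that for every (t,x,s) ∈ [t₀,ϑ₀]×ℝⁿ×ℝⁿ one has H(t,x,s) = max_{v∈Q} min_{u∈P} ⟨s, f(t,x,u,v)⟩ (in particular the indicated maxima and minima are attained). -/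
open Set Filter Metric
open scoped RealInnerProductSpace

noncomputable section

abbrev Eu (n : ℕ) := EuclideanSpace ℝ (Fin n)

/-- ω belongs to the class Ω: even, nonnegative, subadditive, and ω(δ) → 0 as δ → 0. -/
def MemOmega (ω : ℝ → ℝ) : Prop :=
  (∀ δ, 0 ≤ ω δ) ∧ (∀ δ, ω (-δ) = ω δ) ∧
  (∀ δ₁ δ₂, ω (δ₁ + δ₂) ≤ ω δ₁ + ω δ₂) ∧
  Tendsto ω (nhds 0) (nhds 0)

/-- Conditions H1–H3 with constant Υ for a Hamiltonian H on [t₀,ϑ₀]×ℝⁿ×ℝⁿ. -/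
def SatisfiesH (t₀ ϑ₀ : ℝ) (n : ℕ) (Υ : ℝ) (H : ℝ → Eu n → Eu n → ℝ) : Prop :=
  (∀ t ∈ Icc t₀ ϑ₀, ∀ x s : Eu n, |H t x s| ≤ Υ * ‖s‖ * (1 + ‖x‖)) ∧
  (∀ A : Set (Eu n), Bornology.IsBounded A →
    ∃ ωA : ℝ → ℝ, ∃ LA : ℝ, MemOmega ωA ∧ 0 < LA ∧
      ∀ R : ℝ, 0 < R → ∀ t' ∈ Icc t₀ ϑ₀, ∀ t'' ∈ Icc t₀ ϑ₀,
        ∀ x' ∈ A, ∀ x'' ∈ A, ∀ s' s'' : Eu n, ‖s'‖ ≤ R → ‖s''‖ ≤ R →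
          |H t' x' s' - H t'' x'' s''| ≤
            ωA (t' - t'') + LA * R * ‖x' - x''‖ +
              Υ * (1 + min ‖x'‖ ‖x''‖) * ‖s' - s''‖) ∧
  (∀ t ∈ Icc t₀ ϑ₀, ∀ x s : Eu n, ∀ α : ℝ, 0 ≤ α → H t x (α • s) = α * H t x s)

/-- Conditions F1–F3 for a game dynamics f on [t₀,ϑ₀]×ℝⁿ×P×Q. -/
def SatisfiesF (t₀ ϑ₀ : ℝ) (n m : ℕ) (P Q : Set (Eu m))
    (f : ℝ → Eu n → Eu m → Eu m → Eu n) : Prop :=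
  ContinuousOn (fun p : ℝ × Eu n × Eu m × Eu m => f p.1 p.2.1 p.2.2.1 p.2.2.2)
    (Icc t₀ ϑ₀ ×ˢ (univ : Set (Eu n)) ×ˢ P ×ˢ Q) ∧
  (∀ A : Set (Eu n), Bornology.IsBounded A → ∃ K : ℝ, 0 < K ∧
    ∀ t ∈ Icc t₀ ϑ₀, ∀ x' ∈ A, ∀ x'' ∈ A, ∀ u ∈ P, ∀ v ∈ Q,
      ‖f t x' u v - f t x'' u v‖ ≤ K * ‖x' - x''‖) ∧
  (∃ Λ : ℝ, 0 < Λ ∧ ∀ t ∈ Icc t₀ ϑ₀, ∀ x : Eu n, ∀ u ∈ P, ∀ v ∈ Q,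
    ‖f t x u v‖ ≤ Λ * (1 + ‖x‖))

/-! With `λ = Υ (1 + ‖x‖)`, `r = ⟪s, w⟫` and a unit vector `w` as the maximizer's control, the
minimizer's controls `(p, τ) ∈ B̄(0,1) × [0,1]` in `gameDyn` produce the lower value
`H(t,x,w) r + 2 λ min(r, 0) − λ ‖s − r w‖`.
Since `H(t,x,·)` is positively homogeneous and `λ`-Lipschitz, this never exceeds `H(t,x,s)`,
and for `s = ‖s‖ w` it equals `H(t,x,s)`. -/

open Topology

section GameDynamics

variable {E : Type*} [NormedAddCommGroup E] [InnerProductSpace ℝ E]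

def gameDyn (a c : ℝ) (w p : E) (τ : ℝ) : E :=
  (a + 2 * c * τ) • w + c • (p - ⟪p, w⟫ • w)

@[fun_prop]
lemma continuous_gameDyn :
    Continuous fun q : ℝ × ℝ × E × E × ℝ => gameDyn q.1 q.2.1 q.2.2.1 q.2.2.2.1 q.2.2.2.2 := by
  unfold gameDyn; fun_prop

@[simp]
lemma gameDyn_zero_zero (w p : E) (τ : ℝ) : gameDyn 0 0 w p τ = 0 := by
  simp [gameDyn]

lemma inner_gameDyn (a c : ℝ) (w p : E) (τ : ℝ) (s : E) :
    ⟪s, gameDyn a c w p τ⟫ = (a + 2 * c * τ) * ⟪s, w⟫ + c * ⟪p, s - ⟪s, w⟫ • w⟫ := by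
  simp only [gameDyn, inner_add_right, inner_sub_right, real_inner_smul_right, real_inner_comm p s]
  ring

lemma norm_gameDyn_sub_le {w p : E} {τ : ℝ} (hw : ‖w‖ = 1) (hp : ‖p‖ ≤ 1) (hτ : τ ∈ Icc 0 1)
    (a₁ a₂ c₁ c₂ : ℝ) :
    ‖gameDyn a₁ c₁ w p τ - gameDyn a₂ c₂ w p τ‖ ≤ |a₁ - a₂| + 4 * |c₁ - c₂| := by
  have hproj : ‖p - ⟪p, w⟫ • w‖ ≤ 2 :=
    calc ‖p - ⟪p, w⟫ • w‖ ≤ ‖p‖ + |⟪p, w⟫| * ‖w‖ := by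
          simpa [norm_smul] using norm_sub_le p (⟪p, w⟫ • w)
      _ ≤ 1 + ‖p‖ * ‖w‖ * ‖w‖ := by gcongr; exact abs_real_inner_le_norm p w
      _ ≤ 2 := by rw [hw]; linarith
  have hdiff : gameDyn a₁ c₁ w p τ - gameDyn a₂ c₂ w p τ
      = (a₁ - a₂ + 2 * (c₁ - c₂) * τ) • w + (c₁ - c₂) • (p - ⟪p, w⟫ • w) := by
    simp only [gameDyn]; module
  rw [hdiff]
  calc ‖(a₁ - a₂ + 2 * (c₁ - c₂) * τ) • w + (c₁ - c₂) • (p - ⟪p, w⟫ • w)‖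
        ≤ |a₁ - a₂ + 2 * (c₁ - c₂) * τ| * ‖w‖ + |c₁ - c₂| * ‖p - ⟪p, w⟫ • w‖ := by
        simpa [norm_smul] using norm_add_le ((a₁ - a₂ + 2 * (c₁ - c₂) * τ) • w)
          ((c₁ - c₂) • (p - ⟪p, w⟫ • w))
    _ ≤ (|a₁ - a₂| + 2 * |c₁ - c₂| * 1) * 1 + |c₁ - c₂| * 2 := by
        rw [hw]
        gcongr
        calc _ ≤ |a₁ - a₂| + |2 * (c₁ - c₂) * τ| := abs_add_le _ _
          _ = |a₁ - a₂| + 2 * |c₁ - c₂| * |τ| := by rw [abs_mul, abs_mul, abs_two]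
          _ ≤ _ := by gcongr; exact abs_le.mpr ⟨by linarith [hτ.1], hτ.2⟩
    _ = |a₁ - a₂| + 4 * |c₁ - c₂| := by ring

lemma inner_gameDyn_of_eq_smul {g : E → ℝ} (hg : ∀ α : ℝ, 0 ≤ α → ∀ s, g (α • s) = α * g s)
    {s w : E} (hw : ‖w‖ = 1) (hs : s = ‖s‖ • w) (c : ℝ) (p : E) (τ : ℝ) :
    ⟪s, gameDyn (g w) c w p τ⟫ = g s + 2 * c * τ * ‖s‖ := by
  have hsw : ⟪s, w⟫ = ‖s‖ := by
    conv_lhs => rw [hs]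
    rw [real_inner_smul_left, real_inner_self_eq_norm_sq, hw]; ring
  rw [inner_gameDyn, hsw, ← hs, sub_self, inner_zero_right, hs, hg _ (norm_nonneg s), ← hs]
  ring

lemma exists_inner_gameDyn_le {g : E → ℝ} {c : ℝ}
    (hg : ∀ α : ℝ, 0 ≤ α → ∀ s, g (α • s) = α * g s) (hlip : ∀ s s', |g s - g s'| ≤ c * ‖s - s'‖)
    {w : E} (hw : ‖w‖ = 1) (s : E) :
    ∃ p : E, ‖p‖ ≤ 1 ∧ ∃ τ ∈ Icc (0 : ℝ) 1, ⟪s, gameDyn (g w) c w p τ⟫ ≤ g s := by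
  set r := ⟪s, w⟫
  set q := s - r • w
  have hg0 : g 0 = 0 := by simpa using hg 0 le_rfl 0
  have hbound : ∀ v, ‖v‖ = 1 → |g v| ≤ c := fun v hv => by simpa [hg0, hv] using hlip v 0
  -- For `r < 0` the extra `2 c r` absorbs the asymmetry `g w + g (-w) ≥ -2 c`.
  have hline : (g w + 2 * c * (if r < 0 then 1 else 0)) * r ≤ g (r • w) := by
    split_ifs with hr
    · have hneg : r • w = (-r) • (-w) := by rw [smul_neg, neg_smul, neg_neg]
      rw [hneg, hg _ (by linarith)]
      have h₁ := abs_le.mp (hbound w hw)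
      have h₂ := abs_le.mp (hbound (-w) (by rw [norm_neg, hw]))
      nlinarith
    · rw [hg _ (not_lt.mp hr)]; exact le_of_eq (by ring)
  refine ⟨-‖q‖⁻¹ • q, ?_, if r < 0 then 1 else 0, by split_ifs <;> norm_num, ?_⟩
  · rw [norm_smul, norm_neg, norm_inv, norm_norm]
    exact inv_mul_le_one_of_le₀ le_rfl (norm_nonneg q)
  · have hpq : ⟪-‖q‖⁻¹ • q, q⟫ = -‖q‖ := by
      rw [real_inner_smul_left, real_inner_self_eq_norm_sq]
      rcases eq_or_ne ‖q‖ 0 with h | h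
      · simp [h]
      · field_simp
    have hlip_q : g (r • w) - c * ‖q‖ ≤ g s := by
      have := hlip s (r • w); rw [abs_le] at this; linarith
    rw [inner_gameDyn, hpq, mul_comm _ r]
    linarith

end GameDynamics

lemma MemOmega.map_zero {ω : ℝ → ℝ} (hω : MemOmega ω) : ω 0 = 0 := by
  obtain ⟨hnonneg, heven, hsub, hlim⟩ := hω
  have hle : ∀ δ, ω 0 / 2 ≤ ω δ := fun δ => by
    have := hsub δ (-δ); rw [add_neg_cancel, heven] at this; linarith
  linarith [hnonneg 0, ge_of_tendsto hlim (Eventually.of_forall hle)]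

namespace SatisfiesH

variable {t₀ ϑ₀ Υ : ℝ} {n : ℕ} {H : ℝ → Eu n → Eu n → ℝ}

lemma abs_sub_le_mul_norm_sub (hH : SatisfiesH t₀ ϑ₀ n Υ H) {t : ℝ} (ht : t ∈ Icc t₀ ϑ₀)
    (x s s' : Eu n) : |H t x s - H t x s'| ≤ Υ * (1 + ‖x‖) * ‖s - s'‖ := by
  obtain ⟨ω, L, hω, -, hb⟩ := hH.2.1 {x} Bornology.isBounded_singleton
  have := hb (max ‖s‖ ‖s'‖ + 1) (by positivity) t ht t ht x rfl x rfl s s'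
    (by linarith [le_max_left ‖s‖ ‖s'‖]) (by linarith [le_max_right ‖s‖ ‖s'‖])
  simpa [hω.map_zero] using this

lemma exists_abs_sub_le_of_isBounded (hH : SatisfiesH t₀ ϑ₀ n Υ H) {A : Set (Eu n)}
    (hA : Bornology.IsBounded A) :
    ∃ L > 0, ∀ t ∈ Icc t₀ ϑ₀, ∀ x' ∈ A, ∀ x'' ∈ A, ∀ w : Eu n, ‖w‖ = 1 →
      |H t x' w - H t x'' w| ≤ L * ‖x' - x''‖ := by
  obtain ⟨ω, L, hω, hL, hb⟩ := hH.2.1 A hA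
  refine ⟨L, hL, fun t ht x' hx' x'' hx'' w hw => ?_⟩
  simpa [hω.map_zero] using hb 1 one_pos t ht t ht x' hx' x'' hx'' w w hw.le hw.le

lemma continuousOn (hH : SatisfiesH t₀ ϑ₀ n Υ H) (hΥ : 0 < Υ) :
    ContinuousOn (fun q : ℝ × Eu n × Eu n => H q.1 q.2.1 q.2.2) (Icc t₀ ϑ₀ ×ˢ univ) := by
  rintro ⟨t₁, x₁, s₁⟩ ⟨ht₁, -⟩
  obtain ⟨ω, L, hω, -, hb⟩ := hH.2.1 (closedBall x₁ 1) isBounded_closedBall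
  set bound : ℝ × Eu n × Eu n → ℝ := fun q =>
    ω (q.1 - t₁) + L * (‖s₁‖ + 1) * ‖q.2.1 - x₁‖ + Υ * (1 + ‖x₁‖) * ‖q.2.2 - s₁‖
  have hbound : ∀ᶠ q in 𝓝[Icc t₀ ϑ₀ ×ˢ univ] (t₁, x₁, s₁),
      dist (H q.1 q.2.1 q.2.2) (H t₁ x₁ s₁) ≤ bound q := by
    have hnear : ∀ᶠ q : ℝ × Eu n × Eu n in 𝓝 (t₁, x₁, s₁), dist q.2.1 x₁ < 1 ∧ dist q.2.2 s₁ < 1 :=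
      ((continuous_snd.tendsto (t₁, x₁, s₁)).eventually
        (prod_mem_nhds (ball_mem_nhds x₁ one_pos) (ball_mem_nhds s₁ one_pos))).mono fun _ hq => hq
    filter_upwards [nhdsWithin_le_nhds hnear, self_mem_nhdsWithin] with q ⟨hx, hs⟩ hq
    have ht : q.1 ∈ Icc t₀ ϑ₀ := hq.1
    have hs' : ‖q.2.2‖ ≤ ‖s₁‖ + 1 := by
      linarith [norm_le_norm_add_norm_sub' q.2.2 s₁, (dist_eq_norm q.2.2 s₁) ▸ hs]
    refine (hb (‖s₁‖ + 1) (by positivity) q.1 ht t₁ ht₁ q.2.1 hx.le x₁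
      (mem_closedBall_self one_pos.le) q.2.2 s₁ hs' (by linarith)).trans ?_
    have : min ‖q.2.1‖ ‖x₁‖ ≤ ‖x₁‖ := min_le_right _ _
    simp only [bound]
    gcongr
  have hbound_lim : Tendsto bound (𝓝[Icc t₀ ϑ₀ ×ˢ univ] (t₁, x₁, s₁)) (𝓝 0) := by
    refine Tendsto.mono_left ?_ nhdsWithin_le_nhds
    have hω_lim : Tendsto (fun q : ℝ × Eu n × Eu n => ω (q.1 - t₁)) (𝓝 (t₁, x₁, s₁)) (𝓝 0) :=
      hω.2.2.2.comp (tendsto_sub_nhds_zero_iff.mpr (continuous_fst.tendsto _))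
    have hrest : Tendsto (fun q : ℝ × Eu n × Eu n =>
        L * (‖s₁‖ + 1) * ‖q.2.1 - x₁‖ + Υ * (1 + ‖x₁‖) * ‖q.2.2 - s₁‖) (𝓝 (t₁, x₁, s₁)) (𝓝 0) := by
      have : Continuous fun q : ℝ × Eu n × Eu n =>
          L * (‖s₁‖ + 1) * ‖q.2.1 - x₁‖ + Υ * (1 + ‖x₁‖) * ‖q.2.2 - s₁‖ := by fun_prop
      simpa using this.tendsto (t₁, x₁, s₁)
    simpa [bound, add_assoc] using hω_lim.add hrest
  exact tendsto_iff_dist_tendsto_zero.mpr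
    (squeeze_zero' (Eventually.of_forall fun _ => dist_nonneg) hbound hbound_lim)

end SatisfiesH

section Coordinates

variable {n : ℕ}

def snocE (p : Eu n) (τ : ℝ) : Eu (n + 1) :=
  WithLp.toLp 2 (Fin.snoc (α := fun _ => ℝ) (WithLp.ofLp p) τ)

def initE (u : Eu (n + 1)) : Eu n :=
  WithLp.toLp 2 (Fin.init (WithLp.ofLp u))

@[simp]
lemma initE_snocE (p : Eu n) (τ : ℝ) : initE (snocE p τ) = p := by
  simp [initE, snocE]

@[simp]
lemma snocE_last (p : Eu n) (τ : ℝ) : snocE p τ (Fin.last n) = τ := by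
  simp [snocE]

lemma continuous_snocE : Continuous fun q : Eu n × ℝ => snocE q.1 q.2 :=
  PiLp.continuous_toLp 2 _ |>.comp <|
    Continuous.finSnoc (A := fun _ => ℝ) ((PiLp.continuous_ofLp 2 _).comp continuous_fst)
      continuous_snd

@[fun_prop]
lemma continuous_initE : Continuous (initE (n := n)) :=
  PiLp.continuous_toLp 2 _ |>.comp (PiLp.continuous_ofLp 2 _).finInit

end Coordinates

lemma EuclideanSpace.exists_norm_eq_one_eq_norm_smul {n : ℕ} (hn : 1 ≤ n) (s : Eu n) :
    ∃ w : Eu n, ‖w‖ = 1 ∧ s = ‖s‖ • w := by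
  have : Nonempty (Fin n) := ⟨⟨0, hn⟩⟩
  rcases eq_or_ne s 0 with rfl | hs
  · simpa [eq_comm] using exists_norm_eq (Eu n) zero_le_one
  · refine ⟨‖s‖⁻¹ • s, norm_smul_inv_norm hs, ?_⟩
    rw [smul_smul, mul_inv_cancel₀ (norm_ne_zero_iff.mpr hs), one_smul]

lemma isGreatest_setOf_isLeast_image {α β : Type*} {F : α → β → ℝ} {P : Set α} {Q : Set β}
    {v₀ : β} {h : ℝ} (hv₀ : v₀ ∈ Q) (hleast : IsLeast ((F · v₀) '' P) h)
    (hle : ∀ v ∈ Q, ∃ u ∈ P, F u v ≤ h) :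
    IsGreatest {r : ℝ | ∃ v ∈ Q, IsLeast ((F · v) '' P) r} h := by
  refine ⟨⟨v₀, hv₀, hleast⟩, ?_⟩
  rintro r ⟨v, hv, hr⟩
  obtain ⟨u, hu, hFu⟩ := hle v hv
  exact (hr.2 ⟨u, hu, rfl⟩).trans hFu

def controlP (n : ℕ) : Set (Eu (n + 1)) :=
  (fun q : Eu n × ℝ => snocE q.1 q.2) '' (closedBall 0 1 ×ˢ Icc 0 1)

def controlQ (n : ℕ) : Set (Eu (n + 1)) :=
  (fun w => snocE w 0) '' sphere 0 1

lemma isCompact_controlP (n : ℕ) : IsCompact (controlP n) :=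
  ((isCompact_closedBall 0 1).prod isCompact_Icc).image continuous_snocE

lemma isCompact_controlQ (n : ℕ) : IsCompact (controlQ n) :=
  (isCompact_sphere 0 1).image (continuous_snocE.comp (continuous_id.prodMk continuous_const))

lemma snocE_zero_mem_controlP (n : ℕ) : snocE (0 : Eu n) 0 ∈ controlP n :=
  ⟨(0, 0), ⟨mem_closedBall_self zero_le_one, left_mem_Icc.mpr zero_le_one⟩, rfl⟩

lemma snocE_mem_controlQ {n : ℕ} {w : Eu n} (hw : ‖w‖ = 1) : snocE w 0 ∈ controlQ n :=
  ⟨w, by simpa using hw, rfl⟩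

def hamiltonianDyn {n : ℕ} (Υ : ℝ) (H : ℝ → Eu n → Eu n → ℝ) (t : ℝ) (x : Eu n)
    (u v : Eu (n + 1)) : Eu n :=
  gameDyn (H t x (initE v)) (Υ * (1 + ‖x‖)) (initE v) (initE u) (u (Fin.last n))

section HamiltonianDyn

variable {t₀ ϑ₀ Υ : ℝ} {n : ℕ} {H : ℝ → Eu n → Eu n → ℝ}

@[simp]
lemma hamiltonianDyn_snocE (t : ℝ) (x p w : Eu n) (τ σ : ℝ) :
    hamiltonianDyn Υ H t x (snocE p τ) (snocE w σ) = gameDyn (H t x w) (Υ * (1 + ‖x‖)) w p τ := by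
  simp [hamiltonianDyn]

lemma continuousOn_hamiltonianDyn
    (hH : ContinuousOn (fun q : ℝ × Eu n × Eu n => H q.1 q.2.1 q.2.2) (Icc t₀ ϑ₀ ×ˢ univ)) :
    ContinuousOn (fun q : ℝ × Eu n × Eu (n + 1) × Eu (n + 1) =>
      hamiltonianDyn Υ H q.1 q.2.1 q.2.2.1 q.2.2.2) (Icc t₀ ϑ₀ ×ˢ univ) := by
  have hHv : ContinuousOn (fun q : ℝ × Eu n × Eu (n + 1) × Eu (n + 1) =>
      H q.1 q.2.1 (initE q.2.2.2)) (Icc t₀ ϑ₀ ×ˢ univ) :=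
    hH.comp (f := fun q : ℝ × Eu n × Eu (n + 1) × Eu (n + 1) => (q.1, q.2.1, initE q.2.2.2))
      (Continuous.continuousOn (by fun_prop)) fun _ hq => ⟨hq.1, mem_univ _⟩
  have hargs : ContinuousOn (fun q : ℝ × Eu n × Eu (n + 1) × Eu (n + 1) =>
      (H q.1 q.2.1 (initE q.2.2.2), Υ * (1 + ‖q.2.1‖), initE q.2.2.2, initE q.2.2.1,
        q.2.2.1 (Fin.last n))) (Icc t₀ ϑ₀ ×ˢ univ) :=
    hHv.prodMk (Continuous.continuousOn (by fun_prop))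
  exact continuous_gameDyn.comp_continuousOn hargs

lemma continuous_inner_hamiltonianDyn (t : ℝ) (x s : Eu n) (v : Eu (n + 1)) :
    Continuous fun u => ⟪s, hamiltonianDyn Υ H t x u v⟫ :=
  continuous_const.inner <| continuous_gameDyn.comp
    (f := fun u : Eu (n + 1) => (H t x (initE v), Υ * (1 + ‖x‖), initE v, initE u, u (Fin.last n)))
    (by fun_prop)

lemma SatisfiesH.satisfiesF_hamiltonianDyn (hH : SatisfiesH t₀ ϑ₀ n Υ H) (hΥ : 0 < Υ) :
    SatisfiesF t₀ ϑ₀ n (n + 1) (controlP n) (controlQ n) (hamiltonianDyn Υ H) := by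
  refine ⟨(continuousOn_hamiltonianDyn (hH.continuousOn hΥ)).mono
    (prod_mono subset_rfl (subset_univ _)), fun A hA => ?_, ⟨5 * Υ, by positivity, ?_⟩⟩
  · obtain ⟨L, hL, hLx⟩ := hH.exists_abs_sub_le_of_isBounded hA
    refine ⟨L + 4 * Υ, by positivity, ?_⟩
    rintro t ht x' hx' x'' hx'' _ ⟨⟨p, τ⟩, ⟨hp, hτ : τ ∈ Icc 0 1⟩, rfl⟩ _ ⟨w, hw, rfl⟩
    rw [mem_closedBall_zero_iff] at hp
    rw [mem_sphere_zero_iff_norm] at hw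
    have hc : |Υ * (1 + ‖x'‖) - Υ * (1 + ‖x''‖)| ≤ Υ * ‖x' - x''‖ := by
      rw [← mul_sub, abs_mul, abs_of_pos hΥ, add_sub_add_left_eq_sub]
      gcongr
      exact abs_norm_sub_norm_le x' x''
    simp only [hamiltonianDyn_snocE]
    linarith [hLx t ht x' hx' x'' hx'' w hw,
      norm_gameDyn_sub_le hw hp hτ (H t x' w) (H t x'' w) (Υ * (1 + ‖x'‖)) (Υ * (1 + ‖x''‖))]
  · rintro t ht x _ ⟨⟨p, τ⟩, ⟨hp, hτ : τ ∈ Icc 0 1⟩, rfl⟩ _ ⟨w, hw, rfl⟩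
    rw [mem_closedBall_zero_iff] at hp
    rw [mem_sphere_zero_iff_norm] at hw
    have hHw := hH.1 t ht x w
    have hgame := norm_gameDyn_sub_le hw hp hτ (H t x w) 0 (Υ * (1 + ‖x‖)) 0
    rw [gameDyn_zero_zero, sub_zero, sub_zero, sub_zero,
      abs_of_pos (by positivity : 0 < Υ * (1 + ‖x‖))] at hgame
    rw [hw, mul_one] at hHw
    rw [hamiltonianDyn_snocE]
    linarith [le_abs_self (H t x w)]

lemma exists_isLeast_inner_hamiltonianDyn (t : ℝ) (x s : Eu n) (v : Eu (n + 1)) :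
    ∃ r : ℝ, IsLeast ((fun u => ⟪s, hamiltonianDyn Υ H t x u v⟫) '' controlP n) r :=
  ((isCompact_controlP n).image (continuous_inner_hamiltonianDyn t x s v)).exists_isLeast
    (Set.Nonempty.image _ ⟨_, snocE_zero_mem_controlP n⟩)

lemma SatisfiesH.isGreatest_maxmin_hamiltonianDyn (hH : SatisfiesH t₀ ϑ₀ n Υ H) (hΥ : 0 < Υ)
    (hn : 1 ≤ n) {t : ℝ} (ht : t ∈ Icc t₀ ϑ₀) (x s : Eu n) :
    IsGreatest {r : ℝ | ∃ v ∈ controlQ n,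
      IsLeast ((fun u => ⟪s, hamiltonianDyn Υ H t x u v⟫) '' controlP n) r} (H t x s) := by
  have hhom : ∀ α : ℝ, 0 ≤ α → ∀ s, H t x (α • s) = α * H t x s :=
    fun α hα s => hH.2.2 t ht x s α hα
  obtain ⟨w₀, hw₀, hs⟩ := EuclideanSpace.exists_norm_eq_one_eq_norm_smul hn s
  refine isGreatest_setOf_isLeast_image (snocE_mem_controlQ hw₀)
    ⟨⟨_, snocE_zero_mem_controlP n, ?_⟩, ?_⟩ ?_
  · simp [inner_gameDyn_of_eq_smul hhom hw₀ hs]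
  · rintro _ ⟨_, ⟨⟨p, τ⟩, ⟨-, hτ : τ ∈ Icc 0 1⟩, rfl⟩, rfl⟩
    show H t x s ≤ ⟪s, hamiltonianDyn Υ H t x (snocE p τ) (snocE w₀ 0)⟫
    rw [hamiltonianDyn_snocE, inner_gameDyn_of_eq_smul hhom hw₀ hs]
    exact le_add_of_nonneg_right (mul_nonneg (mul_nonneg (by positivity) hτ.1) (norm_nonneg s))
  · rintro _ ⟨w, hw, rfl⟩
    obtain ⟨p, hp, τ, hτ, hle⟩ := exists_inner_gameDyn_le hhom (hH.abs_sub_le_mul_norm_sub ht x)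
      (mem_sphere_zero_iff_norm.mp hw) s
    exact ⟨snocE p τ, ⟨(p, τ), ⟨mem_closedBall_zero_iff.mpr hp, hτ⟩, rfl⟩, by simpa using hle⟩

end HamiltonianDyn

theorem hamiltonian_is_maxmin_general
    (t₀ ϑ₀ : ℝ) (n : ℕ) (hn : 1 ≤ n) (Υ : ℝ) (hΥ : 0 < Υ)
    (H : ℝ → Eu n → Eu n → ℝ) (hH : SatisfiesH t₀ ϑ₀ n Υ H) :
    ∃ m : ℕ, 0 < m ∧ ∃ P Q : Set (Eu m), P.Nonempty ∧ Q.Nonempty ∧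
      IsCompact P ∧ IsCompact Q ∧ ∃ f : ℝ → Eu n → Eu m → Eu m → Eu n,
        SatisfiesF t₀ ϑ₀ n m P Q f ∧
        ∀ t ∈ Icc t₀ ϑ₀, ∀ x s : Eu n,
          (∀ v ∈ Q, ∃ r : ℝ, IsLeast ((fun u => ⟪s, f t x u v⟫) '' P) r) ∧
          IsGreatest {r : ℝ | ∃ v ∈ Q,
            IsLeast ((fun u => ⟪s, f t x u v⟫) '' P) r} (H t x s) := by
  obtain ⟨w, hw, -⟩ := EuclideanSpace.exists_norm_eq_one_eq_norm_smul hn 0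
  exact ⟨n + 1, n.succ_pos, controlP n, controlQ n, ⟨_, snocE_zero_mem_controlP n⟩,
    ⟨_, snocE_mem_controlQ hw⟩, isCompact_controlP n, isCompact_controlQ n, hamiltonianDyn Υ H,
    hH.satisfiesF_hamiltonianDyn hΥ, fun t ht x s =>
      ⟨fun v _ => exists_isLeast_inner_hamiltonianDyn t x s v,
        hH.isGreatest_maxmin_hamiltonianDyn hΥ hn ht x s⟩⟩

/-- Every Hamiltonian satisfying H1–H3 is the maxmin Hamiltonian of some
differential game: there are compact control sets P, Q and a dynamics f
satisfying F1–F3 with H(t,x,s) = max_{v ∈ Q} min_{u ∈ P} ⟨s, f(t,x,u,v)⟩,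
the maxima and minima being attained. -/
theorem hamiltonian_is_maxmin
    (t₀ ϑ₀ : ℝ) (ht : t₀ < ϑ₀) (n : ℕ) (hn : 1 ≤ n) (Υ : ℝ) (hΥ : 0 < Υ)
    (H : ℝ → Eu n → Eu n → ℝ) (hH : SatisfiesH t₀ ϑ₀ n Υ H) :
    ∃ m : ℕ, 0 < m ∧ ∃ P Q : Set (Eu m), P.Nonempty ∧ Q.Nonempty ∧
      IsCompact P ∧ IsCompact Q ∧ ∃ f : ℝ → Eu n → Eu m → Eu m → Eu n,
        SatisfiesF t₀ ϑ₀ n m P Q f ∧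
        ∀ t ∈ Icc t₀ ϑ₀, ∀ x s : Eu n,
          (∀ v ∈ Q, ∃ r : ℝ, IsLeast ((fun u => ⟪s, f t x u v⟫) '' P) r) ∧
          IsGreatest {r : ℝ | ∃ v ∈ Q,
            IsLeast ((fun u => ⟪s, f t x u v⟫) '' P) r} (H t x s) :=
  hamiltonian_is_maxmin_general t₀ ϑ₀ n hn Υ hΥ H hH
end
end

section
/- Let n = 1 and let H : [t₀,ϑ₀]×ℝ×ℝ → ℝ satisfy conditions H1–H3 with constant Υ > 0. Define g : [t₀,ϑ₀]×ℝ×({−1,1}×{−1,1})×({−1,1}×{−1,1}) → ℝ by g(t,x,(y,y'),(z,z')) = (H(t,x,z)+Υ(1+|x|))·z' + Υ(1+|x|)·y + Υ(1+|x|)(y·z+1)·y'. Then for every (t,x,s) ∈ [t₀,ϑ₀]×ℝ×ℝ one has max_{(z,z')∈{−1,1}²} min_{(y,y')∈{−1,1}²} s·g(t,x,(y,y'),(z,z')) = min_{(y,y')∈{−1,1}²} max_{(z,z')∈{−1,1}²} s·g(t,x,(y,y'),(z,z')) = H(t,x,s) (the Isaacs condition holds for g). -/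
open Set Filter

noncomputable section

/-- Conditions H1–H3 with constant Υ for a Hamiltonian H on [t₀,ϑ₀]×ℝ×ℝ (case n = 1). -/
def SatisfiesHR (t₀ ϑ₀ Υ : ℝ) (H : ℝ → ℝ → ℝ → ℝ) : Prop :=
  (∀ t ∈ Icc t₀ ϑ₀, ∀ x s : ℝ, |H t x s| ≤ Υ * |s| * (1 + |x|)) ∧
  (∀ A : Set ℝ, Bornology.IsBounded A →
    ∃ ωA : ℝ → ℝ, ∃ LA : ℝ, MemOmega ωA ∧ 0 < LA ∧
      ∀ R : ℝ, 0 < R → ∀ t' ∈ Icc t₀ ϑ₀, ∀ t'' ∈ Icc t₀ ϑ₀,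
        ∀ x' ∈ A, ∀ x'' ∈ A, ∀ s' s'' : ℝ, |s'| ≤ R → |s''| ≤ R →
          |H t' x' s' - H t'' x'' s''| ≤
            ωA (t' - t'') + LA * R * |x' - x''| +
              Υ * (1 + min |x'| |x''|) * |s' - s''|) ∧
  (∀ t ∈ Icc t₀ ϑ₀, ∀ x s α : ℝ, 0 ≤ α → H t x (α * s) = α * H t x s)

/-
Write `c = Υ(1 + |x|)`. By H1, `|H(t,x,±1)| ≤ c`, and by H3, `H(t,x,s)` equals `s·H(t,x,1)` for
`s ≥ 0` and `|s|·H(t,x,-1)` for `s ≤ 0`. The game `s·g` then has a saddle point in pure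
strategies: `(y,y') = (-1,-1)`, `(z,z') = (1,1)` when `s ≥ 0`, and `(y,y') = (1,1)`,
`(z,z') = (-1,-1)` when `s ≤ 0`; its value is `H(t,x,s)` in both cases.
-/

theorem IsSaddlePointOn.isGreatest_maxMin_and_isLeast_minMax
    {E F β : Type*} [Preorder β] {X : Set E} {Y : Set F} {f : E → F → β} {a : E} {b : F}
    (ha : a ∈ X) (hb : b ∈ Y) (h : IsSaddlePointOn X Y f a b) :
    IsGreatest {r | ∃ y ∈ Y, IsLeast {w | ∃ x ∈ X, w = f x y} r} (f a b) ∧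
      IsLeast {r | ∃ x ∈ X, IsGreatest {w | ∃ y ∈ Y, w = f x y} r} (f a b) := by
  refine ⟨⟨⟨b, hb, ⟨a, ha, rfl⟩, ?_⟩, ?_⟩, ⟨⟨a, ha, ⟨b, hb, rfl⟩, ?_⟩, ?_⟩⟩
  · rintro _ ⟨x, hx, rfl⟩
    exact h x hx b hb
  · rintro r ⟨y, hy, hr⟩
    exact (hr.2 ⟨a, ha, rfl⟩).trans (h a ha y hy)
  · rintro _ ⟨y, hy, rfl⟩
    exact h a ha y hy
  · rintro r ⟨x, hx, hr⟩
    exact (h x hx b hb).trans (hr.2 ⟨b, hb, rfl⟩)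

theorem IsSaddlePointOn.isGreatest_maxMin_and_isLeast_minMax_prod
    {E₁ E₂ F₁ F₂ β : Type*} [Preorder β] {X₁ : Set E₁} {X₂ : Set E₂} {Y₁ : Set F₁} {Y₂ : Set F₂}
    {f : E₁ × E₂ → F₁ × F₂ → β} {a : E₁ × E₂} {b : F₁ × F₂}
    (ha : a ∈ X₁ ×ˢ X₂) (hb : b ∈ Y₁ ×ˢ Y₂) (h : IsSaddlePointOn (X₁ ×ˢ X₂) (Y₁ ×ˢ Y₂) f a b) :
    IsGreatest {r | ∃ y₁ ∈ Y₁, ∃ y₂ ∈ Y₂,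
        IsLeast {w | ∃ x₁ ∈ X₁, ∃ x₂ ∈ X₂, w = f (x₁, x₂) (y₁, y₂)} r} (f a b) ∧
      IsLeast {r | ∃ x₁ ∈ X₁, ∃ x₂ ∈ X₂,
        IsGreatest {w | ∃ y₁ ∈ Y₁, ∃ y₂ ∈ Y₂, w = f (x₁, x₂) (y₁, y₂)} r} (f a b) := by
  simpa only [exists_prod_set] using h.isGreatest_maxMin_and_isLeast_minMax ha hb

/-- The dynamics `g(t,x,·,·)` with `h = H(t,x,·)` and `c = Υ(1 + |x|)`. -/
def isaacsDynamics (h : ℝ → ℝ) (c : ℝ) (y z : ℝ × ℝ) : ℝ :=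
  (h z.1 + c) * z.2 + c * y.1 + c * (y.1 * z.1 + 1) * y.2

section isaacsDynamics

variable {h : ℝ → ℝ} {c s : ℝ}

theorem isSaddlePointOn_isaacsDynamics_of_nonneg (hP : |h 1| ≤ c) (hM : |h (-1)| ≤ c)
    (hs : 0 ≤ s) :
    IsSaddlePointOn (({-1, 1} : Set ℝ) ×ˢ ({-1, 1} : Set ℝ))
      (({-1, 1} : Set ℝ) ×ˢ ({-1, 1} : Set ℝ)) (fun y z ↦ s * isaacsDynamics h c y z)
      (-1, -1) (1, 1) := by
  rw [abs_le] at hP hM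
  rintro ⟨y, y'⟩ ⟨hy, hy'⟩ ⟨z, z'⟩ ⟨hz, hz'⟩
  refine mul_le_mul_of_nonneg_left ?_ hs
  rcases hy with rfl | rfl <;> rcases hy' with rfl | rfl <;>
    rcases hz with rfl | rfl <;> rcases hz' with rfl | rfl <;>
    simp only [isaacsDynamics] <;> linarith

theorem isSaddlePointOn_isaacsDynamics_of_nonpos (hP : |h 1| ≤ c) (hM : |h (-1)| ≤ c)
    (hs : s ≤ 0) :
    IsSaddlePointOn (({-1, 1} : Set ℝ) ×ˢ ({-1, 1} : Set ℝ))
      (({-1, 1} : Set ℝ) ×ˢ ({-1, 1} : Set ℝ)) (fun y z ↦ s * isaacsDynamics h c y z)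
      (1, 1) (-1, -1) := by
  rw [abs_le] at hP hM
  rintro ⟨y, y'⟩ ⟨hy, hy'⟩ ⟨z, z'⟩ ⟨hz, hz'⟩
  refine mul_le_mul_of_nonpos_left ?_ hs
  rcases hy with rfl | rfl <;> rcases hy' with rfl | rfl <;>
    rcases hz with rfl | rfl <;> rcases hz' with rfl | rfl <;>
    simp only [isaacsDynamics] <;> linarith

end isaacsDynamics

theorem isaacs_one_dimensional_general
    (t₀ ϑ₀ : ℝ) (Υ : ℝ)
    (H : ℝ → ℝ → ℝ → ℝ) (hH : SatisfiesHR t₀ ϑ₀ Υ H)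
    (g : ℝ → ℝ → ℝ × ℝ → ℝ × ℝ → ℝ)
    (hg : ∀ t x y y' z z' : ℝ,
      g t x (y, y') (z, z') =
        (H t x z + Υ * (1 + |x|)) * z' + Υ * (1 + |x|) * y +
          Υ * (1 + |x|) * (y * z + 1) * y') :
    ∀ t ∈ Icc t₀ ϑ₀, ∀ x s : ℝ,
      IsGreatest {r : ℝ | ∃ z ∈ ({-1, 1} : Set ℝ), ∃ z' ∈ ({-1, 1} : Set ℝ),
        IsLeast {w : ℝ | ∃ y ∈ ({-1, 1} : Set ℝ), ∃ y' ∈ ({-1, 1} : Set ℝ),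
          w = s * g t x (y, y') (z, z')} r} (H t x s) ∧
      IsLeast {r : ℝ | ∃ y ∈ ({-1, 1} : Set ℝ), ∃ y' ∈ ({-1, 1} : Set ℝ),
        IsGreatest {w : ℝ | ∃ z ∈ ({-1, 1} : Set ℝ), ∃ z' ∈ ({-1, 1} : Set ℝ),
          w = s * g t x (y, y') (z, z')} r} (H t x s) := by
  intro t ht x s
  obtain ⟨hbound, -, hhom⟩ := hH
  have hgt : g t x = isaacsDynamics (H t x) (Υ * (1 + |x|)) := by
    funext ⟨y, y'⟩ ⟨z, z'⟩
    exact hg t x y y' z z'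
  have hP : |H t x 1| ≤ Υ * (1 + |x|) := by simpa using hbound t ht x 1
  have hM : |H t x (-1)| ≤ Υ * (1 + |x|) := by simpa using hbound t ht x (-1)
  rw [hgt]
  rcases le_total 0 s with hs | hs
  · have hHs : H t x s = s * isaacsDynamics (H t x) (Υ * (1 + |x|)) (-1, -1) (1, 1) := by
      simpa [isaacsDynamics] using hhom t ht x 1 s hs
    rw [hHs]
    exact (isSaddlePointOn_isaacsDynamics_of_nonneg hP hM hs)
      |>.isGreatest_maxMin_and_isLeast_minMax_prod (by simp) (by simp)
  · have hHs : H t x s = s * isaacsDynamics (H t x) (Υ * (1 + |x|)) (1, 1) (-1, -1) := by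
      simpa [isaacsDynamics] using hhom t ht x (-1) (-s) (neg_nonneg.mpr hs)
    rw [hHs]
    exact (isSaddlePointOn_isaacsDynamics_of_nonpos hP hM hs)
      |>.isGreatest_maxMin_and_isLeast_minMax_prod (by simp) (by simp)

/-- For n = 1 and a Hamiltonian H satisfying H1–H3 with constant Υ, the explicit
dynamics g(t,x,(y,y'),(z,z')) = (H(t,x,z)+Υ(1+|x|))·z' + Υ(1+|x|)·y + Υ(1+|x|)(y·z+1)·y'
over the control sets {-1,1}×{-1,1} satisfies the Isaacs condition:
max min s·g = min max s·g = H(t,x,s), all maxima and minima being attained. -/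
theorem isaacs_one_dimensional
    (t₀ ϑ₀ : ℝ) (ht : t₀ < ϑ₀) (Υ : ℝ) (hΥ : 0 < Υ)
    (H : ℝ → ℝ → ℝ → ℝ) (hH : SatisfiesHR t₀ ϑ₀ Υ H)
    (g : ℝ → ℝ → ℝ × ℝ → ℝ × ℝ → ℝ)
    (hg : ∀ t x y y' z z' : ℝ,
      g t x (y, y') (z, z') =
        (H t x z + Υ * (1 + |x|)) * z' + Υ * (1 + |x|) * y +
          Υ * (1 + |x|) * (y * z + 1) * y') :
    ∀ t ∈ Icc t₀ ϑ₀, ∀ x s : ℝ,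
      IsGreatest {r : ℝ | ∃ z ∈ ({-1, 1} : Set ℝ), ∃ z' ∈ ({-1, 1} : Set ℝ),
        IsLeast {w : ℝ | ∃ y ∈ ({-1, 1} : Set ℝ), ∃ y' ∈ ({-1, 1} : Set ℝ),
          w = s * g t x (y, y') (z, z')} r} (H t x s) ∧
      IsLeast {r : ℝ | ∃ y ∈ ({-1, 1} : Set ℝ), ∃ y' ∈ ({-1, 1} : Set ℝ),
        IsGreatest {w : ℝ | ∃ z ∈ ({-1, 1} : Set ℝ), ∃ z' ∈ ({-1, 1} : Set ℝ),
          w = s * g t x (y, y') (z, z')} r} (H t x s) :=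
  isaacs_one_dimensional_general t₀ ϑ₀ Υ H hH g hg
end
end

section
/- Let ω ∈ Ω, Γ > 0, L ≥ Γ, let D ⊆ [t₀,ϑ₀]×ℝⁿ×S^{n−1} be nonempty, and let h : D → ℝ satisfy |h(t,x,s)| ≤ Γ(1+‖x‖) for all (t,x,s) ∈ D and |h(t',x',s')−h(t'',x'',s'')| ≤ ω(t'−t'') + L‖x'−x''‖ + Γ(1+min{‖x'‖,‖x''‖})‖s'−s''‖ for all (t',x',s'), (t'',x'',s'') ∈ D. Define F : [t₀,ϑ₀]×ℝⁿ×S^{n−1} → ℝ by F(t,x,s) = max{ −Γ(1+‖x‖), sup_{(τ,y,ξ)∈D} [h(τ,y,ξ) − ω(t−τ) − L‖x−y‖ − Γ(1+‖x‖)‖s−ξ‖] }. Then for all (t',x',s'), (t'',x'',s'') ∈ [t₀,ϑ₀]×ℝⁿ×S^{n−1} one has F(t',x',s') − F(t'',x'',s'') ≤ ω(t'−t'') + (L+4Γ)‖x'−x''‖ + Γ(1+min{‖x'‖,‖x''‖})‖s'−s''‖. -/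
open Set Filter

noncomputable section

/-!
Fix q = (τ, y, ξ) ∈ D. The term h(q) − ω(t−τ) − L‖x−y‖ − Γ(1+‖x‖)‖s−ξ‖ grows by at most the
right-hand side R of the estimate when (t, x, s) moves from (t'', x'', s'') to (t', x', s'):
the ω-part by evenness and subadditivity, the L-part by the triangle inequality, and the Γ-part
at the price of 4Γ‖x'−x''‖, since the weight 1+‖x‖ moves by at most ‖x'−x''‖ while unit vectors
are at distance at most 2. Because |h| ≤ Γ(1+‖y‖) and Γ ≤ L, the term is bounded above by
Γ(1+‖x‖), so the supremum over D is a genuine one and inherits the estimate; the floor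
−Γ(1+‖x‖) changes by at most Γ‖x'−x''‖ ≤ R, and a maximum of two quantities each growing by at
most R grows by at most R.
-/

lemma sub_le_add_of_even_of_subadditive {ω : ℝ → ℝ} (heven : ∀ δ, ω (-δ) = ω δ)
    (hsub : ∀ δ₁ δ₂, ω (δ₁ + δ₂) ≤ ω δ₁ + ω δ₂) (a b c : ℝ) :
    ω (b - c) ≤ ω (a - b) + ω (a - c) := by
  rw [show b - c = -(a - b) + (a - c) by ring, ← heven (a - b)]
  exact hsub _ _

lemma csSup_image_le_csSup_image_add {α : Type*} {D : Set α} {f g : α → ℝ} {c : ℝ}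
    (hD : D.Nonempty) (hg : BddAbove (g '' D)) (hfg : ∀ q ∈ D, f q ≤ g q + c) :
    sSup (f '' D) ≤ sSup (g '' D) + c := by
  refine csSup_le (hD.image f) ?_
  rintro _ ⟨q, hq, rfl⟩
  exact (hfg q hq).trans (add_le_add_left (le_csSup hg (mem_image_of_mem g hq)) c)

section SeminormedAddCommGroup

variable {E : Type*} [SeminormedAddCommGroup E]

lemma norm_le_min_norm_add_norm_sub (x' x'' : E) : ‖x''‖ ≤ min ‖x'‖ ‖x''‖ + ‖x' - x''‖ := by
  rcases le_total ‖x'‖ ‖x''‖ with hle | hle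
  · rw [min_eq_left hle]
    exact norm_le_norm_add_norm_sub x' x''
  · rw [min_eq_right hle]
    exact le_add_of_nonneg_right (norm_nonneg _)

lemma norm_sub_le_two_of_norm_eq_one {a b : E} (ha : ‖a‖ = 1) (hb : ‖b‖ = 1) :
    ‖a - b‖ ≤ 2 := by
  linarith [norm_sub_le a b]

lemma one_add_norm_mul_norm_sub_le {x' x'' s' s'' ξ : E} (hs' : ‖s'‖ = 1) (hs'' : ‖s''‖ = 1)
    (hξ : ‖ξ‖ = 1) :
    (1 + ‖x''‖) * ‖s'' - ξ‖ ≤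
      (1 + ‖x'‖) * ‖s' - ξ‖ + (1 + min ‖x'‖ ‖x''‖) * ‖s' - s''‖ + 4 * ‖x' - x''‖ := by
  have hs : ‖s'' - ξ‖ ≤ ‖s' - s''‖ + ‖s' - ξ‖ := by
    simpa only [norm_sub_rev s'' s'] using norm_sub_le_norm_sub_add_norm_sub s'' s' ξ
  have hx₁ := norm_le_norm_add_norm_sub x' x''
  have hx₂ := norm_le_min_norm_add_norm_sub x' x''
  have hd := norm_nonneg (x' - x'')
  have hξ₂ := mul_le_mul_of_nonneg_left (norm_sub_le_two_of_norm_eq_one hs' hξ) hd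
  have hs₂ := mul_le_mul_of_nonneg_left (norm_sub_le_two_of_norm_eq_one hs' hs'') hd
  calc (1 + ‖x''‖) * ‖s'' - ξ‖
      ≤ (1 + ‖x''‖) * ‖s' - ξ‖ + (1 + ‖x''‖) * ‖s' - s''‖ := by
        nlinarith [norm_nonneg x'']
    _ ≤ (1 + ‖x'‖ + ‖x' - x''‖) * ‖s' - ξ‖ + (1 + min ‖x'‖ ‖x''‖ + ‖x' - x''‖) * ‖s' - s''‖ := by
        gcongr ?_ * _ + ?_ * _ <;> linarith
    _ ≤ _ := by linarith

/-- The quantity whose supremum over `q = (τ, y, ξ) ∈ D` defines the extension at `(t, x, s)`. -/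
def mcshaneTerm (ω : ℝ → ℝ) (Γ L : ℝ) (h : ℝ → E → E → ℝ) (t : ℝ) (x s : E)
    (q : ℝ × E × E) : ℝ :=
  h q.1 q.2.1 q.2.2 - ω (t - q.1) - L * ‖x - q.2.1‖ - Γ * (1 + ‖x‖) * ‖s - q.2.2‖

variable {ω : ℝ → ℝ} {Γ L : ℝ} {h : ℝ → E → E → ℝ}

lemma mcshaneTerm_le (hω₀ : ∀ δ, 0 ≤ ω δ) (hΓ : 0 ≤ Γ) (hL : Γ ≤ L) (t : ℝ) (x s : E)
    {q : ℝ × E × E} (hq : h q.1 q.2.1 q.2.2 ≤ Γ * (1 + ‖q.2.1‖)) :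
    mcshaneTerm ω Γ L h t x s q ≤ Γ * (1 + ‖x‖) := by
  have hy := mul_le_mul_of_nonneg_left (norm_le_norm_add_norm_sub x q.2.1) hΓ
  have hΓL := mul_le_mul_of_nonneg_right hL (norm_nonneg (x - q.2.1))
  have hpen : 0 ≤ Γ * (1 + ‖x‖) * ‖s - q.2.2‖ := by positivity
  unfold mcshaneTerm
  linarith [hω₀ (t - q.1)]

lemma mcshaneTerm_le_add (heven : ∀ δ, ω (-δ) = ω δ)
    (hsub : ∀ δ₁ δ₂, ω (δ₁ + δ₂) ≤ ω δ₁ + ω δ₂) (hΓ : 0 ≤ Γ) (hL : 0 ≤ L) (t' t'' : ℝ)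
    (x' x'' : E) {s' s'' : E} (hs' : ‖s'‖ = 1) (hs'' : ‖s''‖ = 1) {q : ℝ × E × E}
    (hq : ‖q.2.2‖ = 1) :
    mcshaneTerm ω Γ L h t' x' s' q ≤ mcshaneTerm ω Γ L h t'' x'' s'' q +
      (ω (t' - t'') + (L + 4 * Γ) * ‖x' - x''‖ + Γ * (1 + min ‖x'‖ ‖x''‖) * ‖s' - s''‖) := by
  have hω := sub_le_add_of_even_of_subadditive heven hsub t' t'' q.1
  have hx := mul_le_mul_of_nonneg_left (norm_sub_le_norm_sub_add_norm_sub x'' x' q.2.1) hL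
  have hs := mul_le_mul_of_nonneg_left
    (one_add_norm_mul_norm_sub_le (x' := x') (x'' := x'') hs' hs'' hq) hΓ
  rw [norm_sub_rev x'' x'] at hx
  unfold mcshaneTerm
  linarith

end SeminormedAddCommGroup

theorem mcshane_extension_modulus_general
    (t₀ ϑ₀ : ℝ) (n : ℕ)
    (ω : ℝ → ℝ) (hω : MemOmega ω) (Γ L : ℝ) (hΓ : 0 < Γ) (hL : Γ ≤ L)
    (D : Set (ℝ × Eu n × Eu n)) (hDne : D.Nonempty)
    (hDsub : ∀ p ∈ D, p.1 ∈ Icc t₀ ϑ₀ ∧ ‖p.2.2‖ = 1)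
    (h : ℝ → Eu n → Eu n → ℝ)
    (hbd : ∀ p ∈ D, |h p.1 p.2.1 p.2.2| ≤ Γ * (1 + ‖p.2.1‖))
    (F : ℝ → Eu n → Eu n → ℝ)
    (hF : ∀ (t : ℝ) (x s : Eu n),
      F t x s = max (-(Γ * (1 + ‖x‖)))
        (sSup ((fun q : ℝ × Eu n × Eu n =>
          h q.1 q.2.1 q.2.2 - ω (t - q.1) - L * ‖x - q.2.1‖ -
            Γ * (1 + ‖x‖) * ‖s - q.2.2‖) '' D))) :
    ∀ t' ∈ Icc t₀ ϑ₀, ∀ t'' ∈ Icc t₀ ϑ₀, ∀ x' x'' s' s'' : Eu n,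
      ‖s'‖ = 1 → ‖s''‖ = 1 →
      F t' x' s' - F t'' x'' s'' ≤
        ω (t' - t'') + (L + 4 * Γ) * ‖x' - x''‖ +
          Γ * (1 + min ‖x'‖ ‖x''‖) * ‖s' - s''‖ := by
  intro t' _ t'' _ x' x'' s' s'' hs' hs''
  obtain ⟨hω₀, heven, hsub, -⟩ := hω
  have hbdd : BddAbove (mcshaneTerm ω Γ L h t'' x'' s'' '' D) :=
    ⟨_, forall_mem_image.2 fun q hq =>
      mcshaneTerm_le hω₀ hΓ.le hL t'' x'' s'' (le_of_abs_le (hbd q hq))⟩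
  have hsup := csSup_image_le_csSup_image_add hDne hbdd fun q hq =>
    mcshaneTerm_le_add heven hsub hΓ.le (hΓ.le.trans hL) t' t'' x' x'' hs' hs'' (hDsub q hq).2
  have hfloor : -(Γ * (1 + ‖x'‖)) - -(Γ * (1 + ‖x''‖)) ≤
      ω (t' - t'') + (L + 4 * Γ) * ‖x' - x''‖ + Γ * (1 + min ‖x'‖ ‖x''‖) * ‖s' - s''‖ := by
    have hx := mul_le_mul_of_nonneg_left (norm_le_norm_add_norm_sub x' x'') hΓ.le
    have hpen : 0 ≤ Γ * (1 + min ‖x'‖ ‖x''‖) * ‖s' - s''‖ := by positivity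
    nlinarith [hω₀ (t' - t''), norm_nonneg (x' - x'')]
  rw [hF, hF]
  exact (max_sub_max_le_max _ _ _ _).trans (max_le hfloor (sub_le_iff_le_add'.2 hsup))

/-- The McShane-type extension
F(t,x,s) = max{−Γ(1+‖x‖), sup_{(τ,y,ξ)∈D}[h(τ,y,ξ) − ω(t−τ) − L‖x−y‖ − Γ(1+‖x‖)‖s−ξ‖]}
of h satisfies on all of [t₀,ϑ₀]×ℝⁿ×S^{n−1} the modulus-of-continuity estimate
F(t',x',s') − F(t'',x'',s'') ≤ ω(t'−t'') + (L+4Γ)‖x'−x''‖ + Γ(1+min{‖x'‖,‖x''‖})‖s'−s''‖. -/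
theorem mcshane_extension_modulus
    (t₀ ϑ₀ : ℝ) (ht : t₀ < ϑ₀) (n : ℕ) (hn : 1 ≤ n)
    (ω : ℝ → ℝ) (hω : MemOmega ω) (Γ L : ℝ) (hΓ : 0 < Γ) (hL : Γ ≤ L)
    (D : Set (ℝ × Eu n × Eu n)) (hDne : D.Nonempty)
    (hDsub : ∀ p ∈ D, p.1 ∈ Icc t₀ ϑ₀ ∧ ‖p.2.2‖ = 1)
    (h : ℝ → Eu n → Eu n → ℝ)
    (hbd : ∀ p ∈ D, |h p.1 p.2.1 p.2.2| ≤ Γ * (1 + ‖p.2.1‖))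
    (hlip : ∀ p ∈ D, ∀ q ∈ D,
      |h p.1 p.2.1 p.2.2 - h q.1 q.2.1 q.2.2| ≤
        ω (p.1 - q.1) + L * ‖p.2.1 - q.2.1‖ +
          Γ * (1 + min ‖p.2.1‖ ‖q.2.1‖) * ‖p.2.2 - q.2.2‖)
    (F : ℝ → Eu n → Eu n → ℝ)
    (hF : ∀ (t : ℝ) (x s : Eu n),
      F t x s = max (-(Γ * (1 + ‖x‖)))
        (sSup ((fun q : ℝ × Eu n × Eu n =>
          h q.1 q.2.1 q.2.2 - ω (t - q.1) - L * ‖x - q.2.1‖ -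
            Γ * (1 + ‖x‖) * ‖s - q.2.2‖) '' D))) :
    ∀ t' ∈ Icc t₀ ϑ₀, ∀ t'' ∈ Icc t₀ ϑ₀, ∀ x' x'' s' s'' : Eu n,
      ‖s'‖ = 1 → ‖s''‖ = 1 →
      F t' x' s' - F t'' x'' s'' ≤
        ω (t' - t'') + (L + 4 * Γ) * ‖x' - x''‖ +
          Γ * (1 + min ‖x'‖ ‖x''‖) * ‖s' - s''‖ :=
  mcshane_extension_modulus_general t₀ ϑ₀ n ω hω Γ L hΓ hL D hDne hDsub h hbd F hF
end
end

section
/- Consider φ² : [0,1]×ℝ² → ℝ defined by φ²(t,x₁,x₂) = t·(|x₁| − |x₂|). There do not exist Υ > 0 and a function H : [0,1]×ℝ²×ℝ² → ℝ with |H(t,x,s)| ≤ Υ‖s‖(1+‖x‖) for all (t,x,s) such that the Hamilton–Jacobi equation holds at all differentiability points of φ², i.e., such that for every t ∈ (0,1) and every (x₁,x₂) ∈ ℝ² with x₁·x₂ ≠ 0 one has (|x₁| − |x₂|) + H(t,(x₁,x₂),(t·sgn x₁, −t·sgn x₂)) = 0, where sgn x = 1 if x > 0 and sgn x = −1 if x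 < 0. (At such points ∂φ²/∂t = |x₁|−|x₂| and ∇φ² = (t·sgn x₁, −t·sgn x₂).) -/
open Set

noncomputable section

abbrev E2 := EuclideanSpace ℝ (Fin 2)

/-! At `x = (1, 2)` the equation forces `H t x (t • (1, -1)) = 1` for every `t ∈ (0, 1)`,
while the growth bound makes this value `O(t)` as `t → 0`. -/

lemma exists_mem_Ioo_mul_lt_one (C : ℝ) : ∃ t ∈ Ioo (0 : ℝ) 1, C * t < 1 := by
  have hpos : 0 < |C| + 2 := by positivity
  refine ⟨1 / (|C| + 2), ⟨by positivity, ?_⟩, ?_⟩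
  · rw [div_lt_one hpos]
    linarith [abs_nonneg C]
  · calc C * (1 / (|C| + 2)) ≤ |C| / (|C| + 2) := by
          rw [mul_one_div]
          gcongr
          exact le_abs_self C
      _ < 1 := by
          rw [div_lt_one hpos]
          linarith

/-- For φ²(t,x₁,x₂) = t(|x₁|−|x₂|) there is no Hamiltonian H with sublinear growth
|H(t,x,s)| ≤ Υ‖s‖(1+‖x‖) satisfying the Hamilton–Jacobi equation
∂φ²/∂t + H(t,x,∇φ²) = 0 at all differentiability points of φ², i.e. such that
(|x₁|−|x₂|) + H(t,(x₁,x₂),(t·sgn x₁, −t·sgn x₂)) = 0 whenever t ∈ (0,1), x₁x₂ ≠ 0. -/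
theorem phi2_not_a_value :
    ¬ ∃ Υ : ℝ, 0 < Υ ∧ ∃ H : ℝ → E2 → E2 → ℝ,
      (∀ t ∈ Icc (0 : ℝ) 1, ∀ x s : E2, |H t x s| ≤ Υ * ‖s‖ * (1 + ‖x‖)) ∧
      (∀ t ∈ Ioo (0 : ℝ) 1, ∀ x s : E2, x 0 * x 1 ≠ 0 →
        s 0 = t * (if 0 < x 0 then (1 : ℝ) else -1) →
        s 1 = -(t * (if 0 < x 1 then (1 : ℝ) else -1)) →
        (|x 0| - |x 1|) + H t x s = 0) := by
  rintro ⟨Υ, -, H, hbound, hHJ⟩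
  set x : E2 := !₂[1, 2]
  set v : E2 := !₂[1, -1]
  obtain ⟨t, ht, hsmall⟩ := exists_mem_Ioo_mul_lt_one (Υ * ‖v‖ * (1 + ‖x‖))
  have hH : H t x (t • v) = 1 := by
    have := hHJ t ht x (t • v) (by simp [x]) (by simp [x, v]) (by simp [x, v])
    norm_num [x] at this
    linarith
  have hnorm : ‖t • v‖ = t * ‖v‖ := by rw [norm_smul, Real.norm_of_nonneg ht.1.le]
  have := hbound t (Ioo_subset_Icc_self ht) x (t • v)
  rw [hH, hnorm, abs_one] at this
  linarith
end
end
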